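/- If χ is a corrector for (p, c) for some p ∈ ℝ^n, then for every z ∈ ℝ one has (min g)/(∫₀¹ g(s) ds) ≤ χ'(z) ≤ (max g)/(min g). -/

import Mathlib

open Set Filter intervalIntegral
open scoped Topology

noncomputable section

/-- A corrector for `(p, c)`: a C² function `χ : ℝ → ℝ` with `χ' > 0`, `χ(z+1) = χ(z) + 1`,
satisfying `|p|²·χ''(z) − c·χ'(z) + g(χ(z)) = 0` for all `z ∈ ℝ`. -/
def IsCorrector {n : ℕ} (g : ℝ → ℝ) (p : EuclideanSpace ℝ (Fin n)) (c : ℝ) (χ : ℝ → ℝ) : Prop :=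
  ContDiff ℝ 2 χ ∧ (∀ z, 0 < deriv χ z) ∧ (∀ z, χ (z + 1) = χ z + 1) ∧
  ∀ z, ‖p‖ ^ 2 * deriv (deriv χ) z - c * deriv χ z + g (χ z) = 0

/-!
Write `w = χ'`. It is `1`-periodic with `∫₀¹ w = 1`, so integrating the equation over a period gives
`c = ∫₀¹ g ∘ χ ≥ min g`. At an extremum of `w` the term `χ''` vanishes, hence `c w = g ∘ χ` there,
which bounds `max w` by `max g / c` and `min w` from below by `min g / c`. Multiplying the equation
by `w` and integrating, `χ'' χ'` integrates to zero and the substitution `s = χ z` turns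
`∫₀¹ (g ∘ χ) w` into `∫₀¹ g` by periodicity; so `∫₀¹ g = c ∫₀¹ w² ≥ c (∫₀¹ w)² = c`.
-/

namespace Function.Periodic

variable {f : ℝ → ℝ} {T : ℝ}

theorem exists_isMaxOn_of_continuous (hf : Periodic f T) (hT : T ≠ 0) (hc : Continuous f) :
    ∃ x, IsMaxOn f univ x := by
  obtain ⟨_, ⟨x, rfl⟩, hx⟩ := (hf.compact_of_continuous hT hc).exists_isGreatest (range_nonempty f)
  exact ⟨x, fun y _ => hx ⟨y, rfl⟩⟩

theorem exists_isMinOn_of_continuous (hf : Periodic f T) (hT : T ≠ 0) (hc : Continuous f) :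
    ∃ x, IsMinOn f univ x := by
  obtain ⟨_, ⟨x, rfl⟩, hx⟩ := (hf.compact_of_continuous hT hc).exists_isLeast (range_nonempty f)
  exact ⟨x, fun y _ => hx ⟨y, rfl⟩⟩

theorem intervalIntegral_deriv_eq_zero (hf : Periodic f T) (hd : ContDiff ℝ 1 f) :
    ∫ x in (0:ℝ)..T, deriv f x = 0 := by
  rw [integral_deriv_eq_sub (fun x _ => hd.differentiable one_ne_zero x)
    ((hd.continuous_deriv le_rfl).intervalIntegrable 0 T), hf.eq, sub_self]

theorem intervalIntegral_deriv_mul_self_eq_zero (hf : Periodic f T) (hd : ContDiff ℝ 1 f) :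
    ∫ x in (0:ℝ)..T, deriv f x * f x = 0 := by
  have hsq : ∀ x, HasDerivAt (fun x => f x ^ 2 / 2) (deriv f x * f x) x := by
    intro x
    refine (((hd.differentiable one_ne_zero x).hasDerivAt.pow 2).div_const 2).congr_deriv ?_
    push_cast
    ring
  have hint : IntervalIntegrable (fun x => deriv f x * f x) MeasureTheory.volume 0 T :=
    ((hd.continuous_deriv le_rfl).mul hd.continuous).intervalIntegrable 0 T
  rw [integral_eq_sub_of_hasDerivAt (fun x _ => hsq x) hint, hf.eq, sub_self]

end Function.Periodic

theorem sq_integral_le_integral_sq {w : ℝ → ℝ} (hw : Continuous w) :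
    (∫ x in (0:ℝ)..1, w x) ^ 2 ≤ ∫ x in (0:ℝ)..1, w x ^ 2 := by
  set I := ∫ x in (0:ℝ)..1, w x
  have hexpand : ∫ x in (0:ℝ)..1, (w x - I) ^ 2 = (∫ x in (0:ℝ)..1, w x ^ 2) - I ^ 2 := by
    simp only [sub_sq]
    rw [integral_add, integral_sub, integral_mul_const, integral_const_mul]
    · simp [I]; ring
    all_goals apply Continuous.intervalIntegrable; fun_prop
  have hsq : 0 ≤ ∫ x in (0:ℝ)..1, (w x - I) ^ 2 :=
    integral_nonneg zero_le_one fun x _ => sq_nonneg _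
  linarith

namespace IsCorrector

variable {n : ℕ} {g : ℝ → ℝ} {p : EuclideanSpace ℝ (Fin n)} {c : ℝ} {χ : ℝ → ℝ}

theorem differentiable (h : IsCorrector g p c χ) : Differentiable ℝ χ :=
  h.1.differentiable two_ne_zero

theorem contDiff_deriv (h : IsCorrector g p c χ) : ContDiff ℝ 1 (deriv χ) :=
  (contDiff_succ_iff_deriv.mp h.1).2.2

theorem continuous_deriv (h : IsCorrector g p c χ) : Continuous (deriv χ) :=
  h.contDiff_deriv.continuous

theorem periodic_deriv (h : IsCorrector g p c χ) : Function.Periodic (deriv χ) 1 := by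
  intro z
  rw [← deriv_comp_add_const, funext h.2.2.1, deriv_add_const]

theorem apply_one (h : IsCorrector g p c χ) : χ 1 = χ 0 + 1 := by
  simpa using h.2.2.1 0

theorem integral_deriv (h : IsCorrector g p c χ) : ∫ z in (0:ℝ)..1, deriv χ z = 1 := by
  rw [integral_deriv_eq_sub (fun x _ => h.differentiable x)
    (h.continuous_deriv.intervalIntegrable 0 1), h.apply_one, add_sub_cancel_left]

theorem g_comp_eq (h : IsCorrector g p c χ) (z : ℝ) :
    g (χ z) = c * deriv χ z - ‖p‖ ^ 2 * deriv (deriv χ) z := by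
  linarith [h.2.2.2 z]

theorem continuous_g_comp (h : IsCorrector g p c χ) : Continuous fun z => g (χ z) := by
  simp only [h.g_comp_eq]
  exact continuous_const.mul h.continuous_deriv |>.sub
    (continuous_const.mul (h.contDiff_deriv.continuous_deriv le_rfl))

theorem mul_deriv_eq_of_isLocalExtr {z : ℝ} (h : IsCorrector g p c χ)
    (hz : IsLocalExtr (deriv χ) z) : c * deriv χ z = g (χ z) := by
  rw [h.g_comp_eq, hz.deriv_eq_zero, mul_zero, sub_zero]

theorem integral_g_comp (h : IsCorrector g p c χ) : ∫ z in (0:ℝ)..1, g (χ z) = c := by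
  have hw := h.contDiff_deriv
  simp only [h.g_comp_eq]
  rw [integral_sub, integral_const_mul, integral_const_mul, h.integral_deriv,
    h.periodic_deriv.intervalIntegral_deriv_eq_zero hw]
  · ring
  all_goals apply Continuous.intervalIntegrable
  · exact continuous_const.mul hw.continuous
  · exact continuous_const.mul (hw.continuous_deriv le_rfl)

theorem integral_g_comp_mul_deriv (h : IsCorrector g p c χ) :
    ∫ z in (0:ℝ)..1, g (χ z) * deriv χ z = c * ∫ z in (0:ℝ)..1, deriv χ z ^ 2 := by
  have hw := h.contDiff_deriv
  have hpt : ∀ z, g (χ z) * deriv χ z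
      = c * deriv χ z ^ 2 - ‖p‖ ^ 2 * (deriv (deriv χ) z * deriv χ z) := by
    intro z; rw [h.g_comp_eq]; ring
  simp only [hpt]
  rw [integral_sub, integral_const_mul, integral_const_mul,
    h.periodic_deriv.intervalIntegral_deriv_mul_self_eq_zero hw]
  · ring
  all_goals apply Continuous.intervalIntegrable
  · exact continuous_const.mul (hw.continuous.pow 2)
  · exact continuous_const.mul ((hw.continuous_deriv le_rfl).mul hw.continuous)

theorem integral_eq_mul_integral_sq (h : IsCorrector g p c χ) (hg : Continuous g)
    (hper : Function.Periodic g 1) :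
    ∫ s in (0:ℝ)..1, g s = c * ∫ z in (0:ℝ)..1, deriv χ z ^ 2 := by
  have hcov := integral_comp_mul_deriv (a := 0) (b := 1)
    (fun x _ => (h.differentiable x).hasDerivAt) h.continuous_deriv.continuousOn hg
  rw [Function.comp_def] at hcov
  rw [← h.integral_g_comp_mul_deriv, hcov, h.apply_one, hper.intervalIntegral_add_eq (χ 0) 0,
    zero_add]

theorem le_of_forall_le {m : ℝ} (h : IsCorrector g p c χ) (hm : ∀ y, m ≤ g y) : m ≤ c := by
  rw [← h.integral_g_comp]
  calc m = ∫ _ in (0:ℝ)..1, m := by simp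
    _ ≤ ∫ z in (0:ℝ)..1, g (χ z) := integral_mono_on zero_le_one intervalIntegrable_const
        (h.continuous_g_comp.intervalIntegrable 0 1) fun z _ => hm (χ z)

theorem le_integral (h : IsCorrector g p c χ) (hg : Continuous g) (hper : Function.Periodic g 1)
    (hc : 0 ≤ c) : c ≤ ∫ s in (0:ℝ)..1, g s := by
  have hsq := sq_integral_le_integral_sq h.continuous_deriv
  rw [h.integral_deriv, one_pow] at hsq
  rw [h.integral_eq_mul_integral_sq hg hper]
  exact le_mul_of_one_le_right hc hsq

theorem deriv_le_div {m M : ℝ} (h : IsCorrector g p c χ) (hm : ∀ y, m ≤ g y) (hm0 : 0 < m)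
    (hM : ∀ y, g y ≤ M) (z : ℝ) : deriv χ z ≤ M / m := by
  obtain ⟨z₀, hz₀⟩ :=
    h.periodic_deriv.exists_isMaxOn_of_continuous one_ne_zero h.continuous_deriv
  have hc : 0 < c := hm0.trans_le (h.le_of_forall_le hm)
  have hext := h.mul_deriv_eq_of_isLocalExtr (hz₀.isExtr.isLocalExtr univ_mem)
  calc deriv χ z ≤ deriv χ z₀ := hz₀ (mem_univ z)
    _ = g (χ z₀) / c := by rw [eq_div_iff hc.ne', mul_comm, hext]
    _ ≤ M / c := by gcongr; exact hM _
    _ ≤ M / m :=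
        div_le_div_of_nonneg_left (hm0.le.trans ((hm 0).trans (hM 0))) hm0 (h.le_of_forall_le hm)

theorem div_le_deriv {m : ℝ} (h : IsCorrector g p c χ) (hg : Continuous g)
    (hper : Function.Periodic g 1) (hm : ∀ y, m ≤ g y) (hm0 : 0 < m) (z : ℝ) :
    m / ∫ s in (0:ℝ)..1, g s ≤ deriv χ z := by
  obtain ⟨z₁, hz₁⟩ :=
    h.periodic_deriv.exists_isMinOn_of_continuous one_ne_zero h.continuous_deriv
  have hc : 0 < c := hm0.trans_le (h.le_of_forall_le hm)
  have hext := h.mul_deriv_eq_of_isLocalExtr (hz₁.isExtr.isLocalExtr univ_mem)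
  calc m / ∫ s in (0:ℝ)..1, g s ≤ m / c :=
        div_le_div_of_nonneg_left hm0.le hc (h.le_integral hg hper hc.le)
    _ ≤ g (χ z₁) / c := by gcongr; exact hm _
    _ = deriv χ z₁ := by rw [div_eq_iff hc.ne', mul_comm, hext]
    _ ≤ deriv χ z := hz₁ (mem_univ z)

end IsCorrector

theorem statement_8 {n : ℕ} (g : ℝ → ℝ) (hg : ∃ K, LipschitzWith K g)
    (hper : ∀ y, g (y + 1) = g y) (hpos : ∀ y, 0 < g y)
    (m M : ℝ) (hm : IsLeast (Set.range g) m) (hM : IsGreatest (Set.range g) M)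
    (p : EuclideanSpace ℝ (Fin n)) (c : ℝ) (χ : ℝ → ℝ)
    (hχ : IsCorrector g p c χ) :
    ∀ z : ℝ, m / (∫ s in (0:ℝ)..1, g s) ≤ deriv χ z ∧ deriv χ z ≤ M / m := by
  obtain ⟨K, hK⟩ := hg
  have hm_le : ∀ y, m ≤ g y := fun y => hm.2 ⟨y, rfl⟩
  have hm_pos : 0 < m := by
    obtain ⟨y, rfl⟩ := hm.1
    exact hpos y
  exact fun z => ⟨hχ.div_le_deriv hK.continuous hper hm_le hm_pos z,
    hχ.deriv_le_div hm_le hm_pos (fun y => hM.2 ⟨y, rfl⟩) z⟩
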